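/- With q^α = β̃, q^β = α̃, b = N+1+a, the limit as q^a → 0 of q^{a+1} β_n / c₁ equals 1 - (1 - α̃β̃q^{n+1})(1 - α̃q^{n+1})(1 - q^{n-N}) / ((1 - α̃β̃q^{2n+1})(1 - α̃β̃q^{2n+2})) + α̃q^{n-N}(1-q^n)(1-β̃q^n)(1-α̃β̃q^{n+N+1}) / ((1-α̃β̃q^{2n})(1-α̃β̃q^{2n+1})), the recurrence coefficient β̃_n of the monic q-Hahn polynomials. -/

import Mathlib

open Filter

/-- The symmetric `q`-number `[x]_q`. -/
noncomputable def qnum (q x : ℝ) : ℝ :=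
  (q ^ (x / 2) - q ^ (-x / 2)) / (q ^ ((1 : ℝ) / 2) - q ^ (-(1 : ℝ) / 2))

/-- `κ_q = q^{1/2} - q^{-1/2}`. -/
noncomputable def kq (q : ℝ) : ℝ := q ^ ((1 : ℝ) / 2) - q ^ (-(1 : ℝ) / 2)

noncomputable def c1 (q : ℝ) : ℝ := q ^ ((1 : ℝ) / 2) / (kq q) ^ 2

/-- The coefficient `β_n` of the three-term recurrence of the non-standard `q`-Racah
polynomials, with real parameters `a`, `b`, `α`, `β`. -/
noncomputable def qRacahBetaR (q a b α β : ℝ) (n : ℕ) : ℝ :=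
  qnum q a * qnum q (a + 1) -
    qnum q (α + β + n + 1) * qnum q (a - b + n + 1) * qnum q (β + n + 1) *
      qnum q (a + b + α + n + 1) /
      (qnum q (α + β + 2 * n + 1) * qnum q (α + β + 2 * n + 2)) -
    qnum q (α + n) * qnum q (b - a + α + β + n) * qnum q (-a - b + β + n) * qnum q n /
      (qnum q (α + β + 2 * n) * qnum q (α + β + 2 * n + 1))

/-! Writing `[x]_q = q^{-x/2} (q^x - 1) / κ_q`, each of the three terms of `q^{a+1} β_n / c₁`
becomes a product of factors `q^x - 1` times a power of `q` in which the half-integer exponents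
cancel (for the last term after splitting off `q^{2a+1}`). With `t = q^a` and `q^b = q^{N+1} t`
the result is polynomial in `t`, so the limit `q^a → 0⁺` is its value at `t = 0`. -/

lemma qnum_eq_rpow_mul {q : ℝ} (hq : 0 < q) (x : ℝ) :
    qnum q x = q ^ (-x / 2) * (q ^ x - 1) / kq q := by
  rw [qnum, kq, mul_sub, mul_one, ← Real.rpow_add hq]
  ring_nf

lemma kq_ne_zero {q : ℝ} (hq0 : 0 < q) (hq1 : q ≠ 1) : kq q ≠ 0 := by
  have h : kq q * q ^ (1 / 2 : ℝ) = q - 1 := by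
    rw [kq, sub_mul, ← Real.rpow_add hq0, ← Real.rpow_add hq0]
    norm_num
  intro h0
  rw [h0, zero_mul] at h
  exact hq1 (by linarith)

lemma qnum_mul_qnum {q : ℝ} (hq : 0 < q) (x y : ℝ) :
    qnum q x * qnum q y = q ^ (-(x + y) / 2) * ((q ^ x - 1) * (q ^ y - 1)) / kq q ^ 2 := by
  rw [qnum_eq_rpow_mul hq, qnum_eq_rpow_mul hq,
    show -(x + y) / 2 = -x / 2 + -y / 2 by ring, Real.rpow_add hq]
  ring

lemma rpow_mul_kq_sq_mul_qnum_mul_qnum {q x y c : ℝ} (hq0 : 0 < q) (hq1 : q ≠ 1)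
    (h : 2 * c = x + y) :
    q ^ c * kq q ^ 2 * (qnum q x * qnum q y) = (q ^ x - 1) * (q ^ y - 1) := by
  have hc : q ^ c * q ^ (-(x + y) / 2) = 1 := by
    rw [← Real.rpow_add hq0, show c + -(x + y) / 2 = 0 by linarith, Real.rpow_zero]
  calc q ^ c * kq q ^ 2 * (qnum q x * qnum q y)
      = q ^ c * q ^ (-(x + y) / 2) * (kq q ^ 2 / kq q ^ 2) * ((q ^ x - 1) * (q ^ y - 1)) := by
        rw [qnum_mul_qnum hq0]; ring
    _ = (q ^ x - 1) * (q ^ y - 1) := by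
        rw [hc, div_self (pow_ne_zero 2 (kq_ne_zero hq0 hq1))]; ring

lemma rpow_mul_kq_sq_mul_qnum_div {q x₁ x₂ x₃ x₄ y₁ y₂ c : ℝ} (hq0 : 0 < q) (hq1 : q ≠ 1)
    (h : 2 * c + y₁ + y₂ = x₁ + x₂ + x₃ + x₄) :
    q ^ c * kq q ^ 2 *
        (qnum q x₁ * qnum q x₂ * qnum q x₃ * qnum q x₄ / (qnum q y₁ * qnum q y₂)) =
      (q ^ x₁ - 1) * (q ^ x₂ - 1) * ((q ^ x₃ - 1) * (q ^ x₄ - 1)) /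
        ((q ^ y₁ - 1) * (q ^ y₂ - 1)) := by
  have hc : q ^ c * q ^ (-(x₁ + x₂) / 2) * q ^ (-(x₃ + x₄) / 2) = q ^ (-(y₁ + y₂) / 2) := by
    rw [← Real.rpow_add hq0, ← Real.rpow_add hq0]
    congr 1
    linarith
  have hK : kq q ^ 2 ≠ 0 := pow_ne_zero 2 (kq_ne_zero hq0 hq1)
  rw [mul_assoc (qnum q x₁ * qnum q x₂), qnum_mul_qnum hq0 x₁, qnum_mul_qnum hq0 x₃,
    qnum_mul_qnum hq0 y₁]
  generalize (q ^ x₁ - 1) * (q ^ x₂ - 1) = A, (q ^ x₃ - 1) * (q ^ x₄ - 1) = B,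
    (q ^ y₁ - 1) * (q ^ y₂ - 1) = C
  calc _ = q ^ c * q ^ (-(x₁ + x₂) / 2) * q ^ (-(x₃ + x₄) / 2) / q ^ (-(y₁ + y₂) / 2) *
        (kq q ^ 2 / kq q ^ 2) ^ 2 * (A * B / C) := by rw [div_div_eq_mul_div]; ring
    _ = A * B / C := by rw [hc, div_self (Real.rpow_pos_of_pos hq0 _).ne', div_self hK]; ring

/-- `q^{a+1} β_n / c₁` as a function of `t = q^a`, where `ta = q^β = α̃` and `tb = q^α = β̃`. -/
noncomputable def scaledQRacahBeta (q ta tb : ℝ) (N n : ℕ) (t : ℝ) : ℝ :=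
  (1 - t) * (1 - q * t) -
    (1 - ta * tb * q ^ (n + 1)) * (1 - ta * q ^ (n + 1)) * (1 - q ^ ((n : ℝ) - N)) *
        (1 - tb * q ^ (N + n + 2) * t ^ 2) /
      ((1 - ta * tb * q ^ (2 * n + 1)) * (1 - ta * tb * q ^ (2 * n + 2))) +
    (ta * q ^ ((n : ℝ) - N) - q * t ^ 2) * (1 - q ^ n) * (1 - tb * q ^ n) *
        (1 - ta * tb * q ^ (n + N + 1)) /
      ((1 - ta * tb * q ^ (2 * n)) * (1 - ta * tb * q ^ (2 * n + 1)))

lemma rpow_add_one_div_c1_mul_qRacahBetaR {q : ℝ} (hq0 : 0 < q) (hq1 : q ≠ 1)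
    (a α β : ℝ) (N n : ℕ) :
    q ^ (a + 1) / c1 q * qRacahBetaR q a ((N : ℝ) + 1 + a) α β n =
      scaledQRacahBeta q (q ^ β) (q ^ α) N n (q ^ a) := by
  have hc1 : q ^ (a + 1) / c1 q = q ^ (a + 1 / 2) * kq q ^ 2 := by
    rw [c1, div_div_eq_mul_div, div_eq_iff (Real.rpow_pos_of_pos hq0 _).ne',
      mul_right_comm, ← Real.rpow_add hq0]
    ring_nf
  have hsplit : q ^ (a + 1 / 2) = q ^ (2 * a + 1) * q ^ (-(a + 1 / 2)) := by
    rw [← Real.rpow_add hq0]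
    ring_nf
  rw [qRacahBetaR, hc1, mul_sub, mul_sub,
    rpow_mul_kq_sq_mul_qnum_mul_qnum hq0 hq1 (by ring),
    rpow_mul_kq_sq_mul_qnum_div hq0 hq1 (by ring), hsplit,
    mul_assoc (q ^ (2 * a + 1)), mul_assoc (q ^ (2 * a + 1)),
    rpow_mul_kq_sq_mul_qnum_div hq0 hq1 (by ring)]
  simp only [scaledQRacahBeta, Real.rpow_add hq0, Real.rpow_sub hq0, Real.rpow_neg hq0.le,
    Real.rpow_natCast, Real.rpow_one, Real.rpow_two, two_mul, pow_add]
  field_simp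
  ring_nf

lemma continuous_scaledQRacahBeta (q ta tb : ℝ) (N n : ℕ) :
    Continuous (scaledQRacahBeta q ta tb N n) := by
  unfold scaledQRacahBeta
  fun_prop

lemma scaledQRacahBeta_zero (q ta tb : ℝ) (N n : ℕ) :
    scaledQRacahBeta q ta tb N n 0 = 1 -
      (1 - ta * tb * q ^ (n + 1)) * (1 - ta * q ^ (n + 1)) * (1 - q ^ ((n : ℝ) - N)) /
        ((1 - ta * tb * q ^ (2 * n + 1)) * (1 - ta * tb * q ^ (2 * n + 2))) +
      ta * q ^ ((n : ℝ) - N) * (1 - q ^ n) * (1 - tb * q ^ n) * (1 - ta * tb * q ^ (n + N + 1)) /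
        ((1 - ta * tb * q ^ (2 * n)) * (1 - ta * tb * q ^ (2 * n + 1))) := by
  simp [scaledQRacahBeta]

theorem qracah_beta_to_qhahn_beta_general (q ta tb : ℝ) (hq0 : 0 < q) (hq1 : q < 1)
    (hta0 : 0 < ta * q) (htb0 : 0 < tb * q)
    (N n : ℕ) :
    Tendsto (fun t : ℝ =>
        q ^ (Real.logb q t + 1) / c1 q *
          qRacahBetaR q (Real.logb q t) ((N : ℝ) + 1 + Real.logb q t)
            (Real.logb q tb) (Real.logb q ta) n)
      (nhdsWithin 0 (Set.Ioi 0))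
      (nhds (1 -
        (1 - ta * tb * q ^ (n + 1)) * (1 - ta * q ^ (n + 1)) * (1 - q ^ ((n : ℝ) - N)) /
          ((1 - ta * tb * q ^ (2 * n + 1)) * (1 - ta * tb * q ^ (2 * n + 2))) +
        ta * q ^ ((n : ℝ) - N) * (1 - q ^ n) * (1 - tb * q ^ n) *
          (1 - ta * tb * q ^ (n + N + 1)) /
          ((1 - ta * tb * q ^ (2 * n)) * (1 - ta * tb * q ^ (2 * n + 1))))) := by
  have hta : 0 < ta := pos_of_mul_pos_left hta0 hq0.le
  have htb : 0 < tb := pos_of_mul_pos_left htb0 hq0.le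
  rw [← scaledQRacahBeta_zero]
  refine ((continuous_scaledQRacahBeta q ta tb N n).tendsto 0).mono_left nhdsWithin_le_nhds
    |>.congr' ?_
  filter_upwards [self_mem_nhdsWithin] with t ht
  rw [rpow_add_one_div_c1_mul_qRacahBetaR hq0 hq1.ne, Real.rpow_logb hq0 hq1.ne ht,
    Real.rpow_logb hq0 hq1.ne hta, Real.rpow_logb hq0 hq1.ne htb]

theorem qracah_beta_to_qhahn_beta (q ta tb : ℝ) (hq0 : 0 < q) (hq1 : q < 1)
    (hta0 : 0 < ta * q) (hta1 : ta * q < 1) (htb0 : 0 < tb * q) (htb1 : tb * q < 1)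
    (N n : ℕ) (hn : n ≤ N) :
    Tendsto (fun t : ℝ =>
        q ^ (Real.logb q t + 1) / c1 q *
          qRacahBetaR q (Real.logb q t) ((N : ℝ) + 1 + Real.logb q t)
            (Real.logb q tb) (Real.logb q ta) n)
      (nhdsWithin 0 (Set.Ioi 0))
      (nhds (1 -
        (1 - ta * tb * q ^ (n + 1)) * (1 - ta * q ^ (n + 1)) * (1 - q ^ ((n : ℝ) - N)) /
          ((1 - ta * tb * q ^ (2 * n + 1)) * (1 - ta * tb * q ^ (2 * n + 2))) +
        ta * q ^ ((n : ℝ) - N) * (1 - q ^ n) * (1 - tb * q ^ n) *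
          (1 - ta * tb * q ^ (n + N + 1)) /
          ((1 - ta * tb * q ^ (2 * n)) * (1 - ta * tb * q ^ (2 * n + 1))))) :=
  qracah_beta_to_qhahn_beta_general q ta tb hq0 hq1 hta0 htb0 N n
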